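/- arXiv:1810.01518 — 7 statements merged into one kernel-verified Lean document; each statement's English description precedes it below -/
import Mathlib

section
/- There exists a strictly increasing sequence s : ℕ → ℕ+ such that for all finite nonempty subsets A, B of ℕ with max A < min B, the sum ∑_{n∈A} s n divides ∑_{n∈B} s n. -/
/-!
Choose each term divisible by the factorial of the sum of all earlier terms. A block sum `s_A`
with `max A < b` is a positive number at most that sum, so it divides `s b`, hence every
term of a later block and therefore the block sum `s_B`.
-/

open Finset Nat

theorem Finset.sum_dvd_sum_of_factorial_sum_range_dvd {s : ℕ → ℕ}
    (hs : ∀ n, (∑ k ∈ range n, s k)! ∣ s n) {A B : Finset ℕ} (hA : 0 < ∑ a ∈ A, s a)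
    (hAB : ∀ a ∈ A, ∀ b ∈ B, a < b) : (∑ a ∈ A, s a) ∣ ∑ b ∈ B, s b := by
  refine dvd_sum fun b hb => ?_
  have hA_sub : A ⊆ range b := fun a ha => mem_range.mpr (hAB a ha b hb)
  have hA_le : ∑ a ∈ A, s a ≤ ∑ k ∈ range b, s k := sum_le_sum_of_subset hA_sub
  exact (Nat.dvd_factorial hA hA_le).trans (hs b)

namespace BlockDivisible

/-- The partial sums of `seq`; recursing on them rather than on `seq` keeps the recursion
primitive. -/
def partialSum : ℕ → ℕ
  | 0 => 0
  | n + 1 => partialSum n + (partialSum n + 1)!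

def seq (n : ℕ) : ℕ := (partialSum n + 1)!

theorem sum_range_seq (n : ℕ) : ∑ k ∈ range n, seq k = partialSum n := by
  induction n with
  | zero => rfl
  | succ n ih => rw [sum_range_succ, ih, seq, partialSum]

theorem seq_pos (n : ℕ) : 0 < seq n := factorial_pos _

theorem seq_strictMono : StrictMono seq := by
  refine strictMono_nat_of_lt_succ fun n => ?_
  have : partialSum n < partialSum (n + 1) := by
    rw [partialSum]
    exact Nat.lt_add_of_pos_right (factorial_pos _)
  exact (factorial_lt (succ_pos _)).mpr (by omega)

theorem factorial_sum_range_dvd_seq (n : ℕ) : (∑ k ∈ range n, seq k)! ∣ seq n := by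
  rw [sum_range_seq]
  exact factorial_dvd_factorial (le_succ _)

end BlockDivisible

/-- There exists a strictly increasing sequence `s : ℕ → ℕ+` such that for all finite
nonempty subsets `A, B` of `ℕ` with `max A < min B`, `∑_{n∈A} s n` divides `∑_{n∈B} s n`. -/
theorem exists_block_divisible_sequence :
    ∃ s : ℕ → ℕ+, StrictMono s ∧
      ∀ (A B : Finset ℕ) (hA : A.Nonempty) (hB : B.Nonempty),
        A.max' hA < B.min' hB →
        (∑ n ∈ A, (s n : ℕ)) ∣ (∑ n ∈ B, (s n : ℕ)) := by
  open BlockDivisible in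
  refine ⟨fun n => ⟨seq n, seq_pos n⟩, fun m n hmn => PNat.coe_lt_coe _ _ |>.mp
    (seq_strictMono hmn), fun A B hA hB hAB => ?_⟩
  have hA_pos : 0 < ∑ n ∈ A, seq n := sum_pos (fun n _ => seq_pos n) hA
  refine sum_dvd_sum_of_factorial_sum_range_dvd factorial_sum_range_dvd_seq hA_pos
    fun a ha b hb => ?_
  calc a ≤ A.max' hA := le_max' A a ha
    _ < B.min' hB := hAB
    _ ≤ b := min'_le B b hb
end

section
/- The sequence defined by s 0 = 1 and s (n+1) = ∏ over nonempty subsets A of {0,...,n} of s_A, is block-divisible: for finite nonempty A, B ⊆ ℕ with max A < min B, s_A divides s_B. -/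
/-! Every nonempty `A ⊆ {0,…,n}` indexes one factor `s_A` of the product defining `s (n+1)`,
so `s_A ∣ s m` for every `m > max A`; summing over `m ∈ B` gives `s_A ∣ s_B`. -/

section RecursiveSequence

variable {s : ℕ → ℕ}
  (hrec : ∀ n : ℕ,
    s (n + 1) =
      ∏ A ∈ (Finset.range (n + 1)).powerset.filter (fun A => A.Nonempty),
        ∑ m ∈ A, s m)
include hrec

theorem sum_dvd_succ_of_subset_range {A : Finset ℕ} (hA : A.Nonempty) {n : ℕ}
    (hsub : A ⊆ Finset.range (n + 1)) : (∑ m ∈ A, s m) ∣ s (n + 1) :=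
  hrec n ▸ Finset.dvd_prod_of_mem _ (Finset.mem_filter.2 ⟨Finset.mem_powerset.2 hsub, hA⟩)

theorem sum_dvd_of_max'_lt {A : Finset ℕ} (hA : A.Nonempty) {n : ℕ} (hn : A.max' hA < n) :
    (∑ m ∈ A, s m) ∣ s n := by
  obtain ⟨k, rfl⟩ : ∃ k, n = k + 1 := Nat.exists_eq_add_one.2 (by omega)
  refine sum_dvd_succ_of_subset_range hrec hA fun a ha => Finset.mem_range.2 ?_
  exact (A.le_max' a ha).trans_lt hn

end RecursiveSequence

theorem recursive_sequence_block_divisible_general (s : ℕ → ℕ)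
    (hrec : ∀ n : ℕ,
      s (n + 1) =
        ∏ A ∈ (Finset.range (n + 1)).powerset.filter (fun A => A.Nonempty),
          ∑ m ∈ A, s m) :
    ∀ (A B : Finset ℕ) (hA : A.Nonempty) (hB : B.Nonempty),
      A.max' hA < B.min' hB →
      (∑ n ∈ A, s n) ∣ (∑ n ∈ B, s n) := by
  intro A B hA hB hlt
  exact Finset.dvd_sum fun n hn => sum_dvd_of_max'_lt hrec hA (hlt.trans_le (B.min'_le n hn))

/-- The sequence defined by `s 0 = 1` and
`s (n+1) = ∏_{∅ ≠ A ⊆ {0,…,n}} (∑_{m∈A} s m)` is block-divisible: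
for finite nonempty `A, B ⊆ ℕ` with `max A < min B`, `s_A ∣ s_B`. -/
theorem recursive_sequence_block_divisible (s : ℕ → ℕ)
    (h0 : s 0 = 1)
    (hrec : ∀ n : ℕ,
      s (n + 1) =
        ∏ A ∈ (Finset.range (n + 1)).powerset.filter (fun A => A.Nonempty),
          ∑ m ∈ A, s m) :
    ∀ (A B : Finset ℕ) (hA : A.Nonempty) (hB : B.Nonempty),
      A.max' hA < B.min' hB →
      (∑ n ∈ A, s n) ∣ (∑ n ∈ B, s n) :=
  recursive_sequence_block_divisible_general s hrec
end

section
/- Let A be a multiplicative subgroup of the positive rationals ℚ₊ of finite index, and let A* := A ∩ ℤ₊ be the set of positive integers in A. Then the set {a ∈ ℤ₊ : a ∈ A* and a + 1 ∈ A*} is an IP-set, i.e., there exists a sequence (aᵢ) of positive integers such that every finite sum ∑_{i∈I} aᵢ over a nonempty finite index set I lies in A* ∩ (A* − 1). -/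
/-!
Colour the positive integers by their class in the finite group `ℚ₊ ⧸ A`. Hindman's theorem gives
a sequence `b` all of whose finite sums have one colour `γ`. Applying it again to the finite sums of
the tail of `b`, coloured by their residue mod `t = b₀`, gives a sum subsystem `c` all of whose
finite sums are divisible by `t`. For a finite sum `s` of `c`, both `s` and `t + s` are finite sums
of `b`, so `t`, `s` and `t + s` all have colour `γ`. Since colours are multiplicative, `s / t` and
`s / t + 1` have the trivial colour, i.e. lie in `A`; so `aᵢ = cᵢ / t` works.
-/

/-- The multiplicative group of positive rationals, as a subgroup of `ℚˣ`. -/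
def posRat : Subgroup ℚˣ where
  carrier := {x | 0 < (x : ℚ)}
  one_mem' := by norm_num
  mul_mem' := by
    intro a b ha hb
    simp only [Set.mem_setOf_eq, Units.val_mul] at *
    exact mul_pos ha hb
  inv_mem' := by
    intro x hx
    simp only [Set.mem_setOf_eq] at *
    rw [Units.val_inv_eq_inv_val]
    exact inv_pos.mpr hx

/-- `A* = A ∩ ℤ₊`: the set of positive integers lying in `A`. -/
def posIntSet (A : Subgroup ↥posRat) : Set ℕ :=
  {n | 0 < n ∧ ∃ x ∈ A, ((x : ℚˣ) : ℚ) = (n : ℚ)}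

namespace Hindman

theorem pos_of_mem_FS {a : Stream' ℕ} (ha : ∀ i, 0 < a.get i) {m : ℕ} (hm : m ∈ FS a) :
    0 < m := by
  induction hm with
  | head' a => exact ha 0
  | tail' a m _ ih => exact ih fun i => ha (i + 1)
  | cons' a m _ ih => exact Nat.add_pos_left (ha 0) m

theorem exists_FS_subset_inter_fiber {M α : Type*} [AddSemigroup M] [Finite α] (f : M → α)
    (a : Stream' M) : ∃ x, ∃ b : Stream' M, FS b ⊆ FS a ∩ f ⁻¹' {x} := by
  obtain ⟨-, ⟨x, rfl⟩, b, hb⟩ := FS_partition_regular a (Set.range fun x => FS a ∩ f ⁻¹' {x})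
    (Set.finite_range _) fun m hm => Set.mem_sUnion.mpr ⟨_, ⟨f m, rfl⟩, hm, rfl⟩
  exact ⟨x, b, hb⟩

/-- The fibre `f ⁻¹' {x}` containing an FS-set is closed under `+`, which forces `x = 0`. -/
theorem exists_FS_subset_inter_ker {M G : Type*} [AddSemigroup M] [AddMonoid G]
    [IsLeftCancelAdd G] [Finite G] (f : M →ₙ+ G) (a : Stream' M) :
    ∃ b : Stream' M, FS b ⊆ FS a ∩ {m | f m = 0} := by
  obtain ⟨x, b, hb⟩ := exists_FS_subset_inter_fiber f a
  have hfx : ∀ m ∈ FS b, f m = x := fun m hm => (hb hm).2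
  have hx : x + x = x :=
    calc x + x = f (b.get 0 + b.get 1) := by
          rw [map_add, hfx _ (FS.singleton b 0), hfx _ (FS.singleton b 1)]
      _ = x := hfx _ (FS.add_two b 0 1 one_pos)
  refine ⟨b, fun m hm => ⟨(hb hm).1, ?_⟩⟩
  exact (hfx m hm).trans (add_eq_left.mp hx)

end Hindman

open Hindman in
theorem exists_forall_finsetSum_and_succ_eq_one {G : Type*} [Monoid G] [IsLeftCancelMul G]
    [Finite G] (χ : ℕ → G) (hχ : ∀ m n, 0 < m → 0 < n → χ (m * n) = χ m * χ n) :
    ∃ a : ℕ → ℕ, (∀ i, 0 < a i) ∧ ∀ I : Finset ℕ, I.Nonempty →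
      χ (∑ i ∈ I, a i) = 1 ∧ χ (∑ i ∈ I, a i + 1) = 1 := by
  -- Working inside the FS-set of `1, 2, 3, …` keeps every finite sum positive.
  obtain ⟨γ, b, hb⟩ := exists_FS_subset_inter_fiber χ (fun i => i + 1 : Stream' ℕ)
  have hb_pos : ∀ m ∈ FS b, 0 < m := fun m hm => pos_of_mem_FS Nat.succ_pos (hb hm).1
  have hbγ : ∀ m ∈ FS b, χ m = γ := fun m hm => (hb hm).2
  set t := b.head
  have ht : 0 < t := hb_pos _ (FS.head b)
  have cancel : ∀ m, 0 < m → χ (t * m) = γ → χ m = 1 := fun m hm h =>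
    mul_eq_left.mp ((hχ t m ht hm).symm.trans (h.trans (hbγ _ (FS.head b)).symm))
  have : NeZero t := ⟨ht.ne'⟩
  obtain ⟨c, hc⟩ := exists_FS_subset_inter_ker (Nat.castAddMonoidHom (ZMod t)).toAddHom b.tail
  have hc_tail : ∀ m ∈ FS c, m ∈ FS b.tail := fun m hm => (hc hm).1
  have hc_dvd : ∀ m ∈ FS c, t ∣ m := fun m hm => (ZMod.natCast_eq_zero_iff m t).mp (hc hm).2
  have ha : ∀ i, 0 < c.get i / t := fun i =>
    have hi := FS.singleton c i
    Nat.div_pos (Nat.le_of_dvd (hb_pos _ (FS.tail b _ (hc_tail _ hi))) (hc_dvd _ hi)) ht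
  refine ⟨fun i => c.get i / t, ha, fun I hI => ?_⟩
  have hS := hc_tail _ (FS.finsetSum c I hI)
  have hS_eq : t * ∑ i ∈ I, c.get i / t = ∑ i ∈ I, c.get i := by
    rw [Finset.mul_sum]
    exact Finset.sum_congr rfl fun i _ => Nat.mul_div_cancel' (hc_dvd _ (FS.singleton c i))
  constructor
  · refine cancel _ (Finset.sum_pos (fun i _ => ha i) hI) ?_
    rw [hS_eq]
    exact hbγ _ (FS.tail b _ hS)
  · refine cancel _ (Nat.succ_pos _) ?_
    rw [mul_add_one, hS_eq, add_comm]
    exact hbγ _ (FS.cons b _ hS)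

def pnatToPosRat : ℕ+ →* posRat where
  toFun n := ⟨Units.mk0 (n : ℚ) (by positivity), show (0 : ℚ) < n by positivity⟩
  map_one' := by ext; simp
  map_mul' m n := by ext; simp

theorem Nat.toPNat'_mul {m n : ℕ} (hm : 0 < m) (hn : 0 < n) :
    (m * n).toPNat' = m.toPNat' * n.toPNat' :=
  PNat.eq <| by simp [hm, hn]

def posIntClass (A : Subgroup posRat) (n : ℕ) : posRat ⧸ A :=
  pnatToPosRat n.toPNat'

theorem posIntClass_mul (A : Subgroup posRat) {m n : ℕ} (hm : 0 < m) (hn : 0 < n) :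
    posIntClass A (m * n) = posIntClass A m * posIntClass A n := by
  simp only [posIntClass, Nat.toPNat'_mul hm hn, map_mul, QuotientGroup.mk_mul]

theorem mem_posIntSet_of_posIntClass_eq_one {A : Subgroup posRat} {n : ℕ} (hn : 0 < n)
    (h : posIntClass A n = 1) : n ∈ posIntSet A :=
  ⟨hn, _, (QuotientGroup.eq_one_iff _).mp h, by simp [pnatToPosRat, PNat.toPNat'_coe hn]⟩

/-- If `A ≤ ℚ₊` is a multiplicative subgroup of finite index, then
`A* ∩ (A* − 1)` is an IP-set: there is a sequence of positive integers all of whose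
finite nonempty subset sums `m` satisfy `m ∈ A*` and `m + 1 ∈ A*`. -/
theorem hildebrand_generalization (A : Subgroup ↥posRat) (hA : A.FiniteIndex) :
    ∃ a : ℕ → ℕ, (∀ i, 0 < a i) ∧
      ∀ I : Finset ℕ, I.Nonempty →
        (∑ i ∈ I, a i) ∈ posIntSet A ∧ (∑ i ∈ I, a i) + 1 ∈ posIntSet A := by
  have : Finite (posRat ⧸ A) := A.finite_quotient_of_finiteIndex
  obtain ⟨a, ha, hsum⟩ :=
    exists_forall_finsetSum_and_succ_eq_one (posIntClass A) fun _ _ => posIntClass_mul A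
  refine ⟨a, ha, fun I hI => ⟨?_, ?_⟩⟩
  · exact mem_posIntSet_of_posIntClass_eq_one (Finset.sum_pos (fun i _ => ha i) hI) (hsum I hI).1
  · exact mem_posIntSet_of_posIntClass_eq_one (Nat.succ_pos _) (hsum I hI).2
end

section
/- Let A be a multiplicative subgroup of the positive rationals ℚ₊ such that ℚ₊/A is cyclic of finite order, and let A* := A ∩ ℤ₊. Then there exists a positive integer a with a ∈ A* and a + 1 ∈ A*. -/
/-!
Colour each positive integer by its class in the finite group `ℚ₊/A`. An idempotent ultrafilter `U`
on `(ℕ+, +)` yields a monochromatic triple `x, y, x + y` with `x ∣ y`: idempotence makes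
`{x | ∀ᶠ y in U, x + y ∈ C}` large for the large colour class `C`, and `U` concentrates on the
multiples of `x`, because its image in `ZMod x` is an idempotent point, hence `0`. Writing
`y = x * q`, the classes of `x`, `x * q` and `x * (q + 1)` agree, so `q` and `q + 1` lie in `A`.
-/

attribute [local instance] Ultrafilter.add Ultrafilter.addSemigroup

theorem Ultrafilter.exists_eventually_eq {M Q : Type*} [Finite Q] (U : Ultrafilter M)
    (f : M → Q) : ∃ q, ∀ᶠ m in U, f m = q :=
  Ultrafilter.eventually_exists_iff.mp (.of_forall fun m => ⟨f m, rfl⟩)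

theorem Ultrafilter.eventually_eventually_add {M : Type*} [Add M] {U : Ultrafilter M}
    (hU : U + U = U) {p : M → Prop} (h : ∀ᶠ m in U, p m) : ∀ᶠ m in U, ∀ᶠ m' in U, p (m + m') := by
  rw [← hU] at h
  exact h

theorem Ultrafilter.eventually_apply_eq_zero_of_add_self_eq {M G : Type*} [Add M] [AddGroup G]
    [Finite G] (f : AddHom M G) {U : Ultrafilter M} (hU : U + U = U) : ∀ᶠ m in U, f m = 0 := by
  obtain ⟨g, hg⟩ := U.exists_eventually_eq f
  obtain ⟨m, hm, hm_add⟩ := (hg.and (eventually_eventually_add hU hg)).exists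
  obtain ⟨m', hm', hmm'⟩ := (hg.and hm_add).exists
  have hgg : g + g = g := by rwa [map_add, hm, hm'] at hmm'
  filter_upwards [hg] with m hm
  rw [hm, ← add_eq_left.mp hgg]

theorem PNat.exists_dvd_of_finite_coloring {Q : Type*} [Finite Q] (c : ℕ+ → Q) :
    ∃ x y : ℕ+, x ∣ y ∧ c y = c x ∧ c (x + y) = c x := by
  obtain ⟨U, hU⟩ :=
    exists_idempotent_of_compact_t2_of_continuous_add_left (@Ultrafilter.continuous_add_left ℕ+ _)
  obtain ⟨c₀, hc₀⟩ := U.exists_eventually_eq c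
  obtain ⟨x, hx, hx_add⟩ := (hc₀.and (Ultrafilter.eventually_eventually_add hU hc₀)).exists
  let toZMod : AddHom ℕ+ (ZMod x) := (Nat.castAddMonoidHom (ZMod x)).toAddHom.comp PNat.coeAddHom
  have hmultiples := Ultrafilter.eventually_apply_eq_zero_of_add_self_eq toZMod hU
  obtain ⟨y, hy, hxy, hy_mod⟩ := (hc₀.and (hx_add.and hmultiples)).exists
  exact ⟨x, y, PNat.dvd_iff.mpr ((ZMod.natCast_eq_zero_iff _ _).mp hy_mod), by rw [hy, hx],
    by rw [hxy, hx]⟩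

theorem MonoidHom.exists_map_eq_one_and_map_add_one_eq_one {G : Type*} [LeftCancelMonoid G]
    [Finite G] (u : ℕ+ →* G) : ∃ q : ℕ+, u q = 1 ∧ u (q + 1) = 1 := by
  obtain ⟨x, _, ⟨q, rfl⟩, hy, hxy⟩ := PNat.exists_dvd_of_finite_coloring u
  refine ⟨q, (mul_eq_left (a := u x)).mp ?_, (mul_eq_left (a := u x)).mp ?_⟩
  · rwa [← map_mul]
  · rwa [← map_mul, mul_add_one, add_comm]

def PNat.toPosRat : ℕ+ →* posRat where
  toFun n := ⟨Units.mk0 (n : ℚ) (by positivity), show (0 : ℚ) < n by positivity⟩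
  map_one' := by ext; simp
  map_mul' m n := by ext; simp

theorem PNat.coe_mem_posIntSet {A : Subgroup posRat} {n : ℕ+} (h : n.toPosRat ∈ A) :
    (n : ℕ) ∈ posIntSet A :=
  ⟨n.pos, _, h, rfl⟩

theorem hildebrand_general (A : Subgroup ↥posRat)
    (hfin : Finite (↥posRat ⧸ A)) :
    ∃ a : ℕ, 0 < a ∧ a ∈ posIntSet A ∧ a + 1 ∈ posIntSet A := by
  obtain ⟨q, hq, hq_succ⟩ :=
    ((QuotientGroup.mk' A).comp PNat.toPosRat).exists_map_eq_one_and_map_add_one_eq_one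
  exact ⟨q, q.pos, PNat.coe_mem_posIntSet ((QuotientGroup.eq_one_iff _).mp hq),
    PNat.coe_mem_posIntSet ((QuotientGroup.eq_one_iff _).mp hq_succ)⟩

/-- Hildebrand's theorem: if `A ≤ ℚ₊` is a subgroup with `ℚ₊/A` finite cyclic,
then there is a positive integer `a` with `a ∈ A*` and `a + 1 ∈ A*`. -/
theorem hildebrand (A : Subgroup ↥posRat)
    (hfin : Finite (↥posRat ⧸ A)) (hcyc : IsCyclic (↥posRat ⧸ A)) :
    ∃ a : ℕ, 0 < a ∧ a ∈ posIntSet A ∧ a + 1 ∈ posIntSet A :=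
  hildebrand_general A hfin
end

section
/- Fix k ≥ 1. If f : ℤ₊ → ℂ is completely multiplicative (f(mn) = f(m)f(n) for all m, n) and takes values in the k-th roots of unity, then there exists a ∈ ℤ₊ with f(a) = f(a+1) = 1. -/
/-!
Colour `ℕ+` by the finitely many values of `f`. Hindman's theorem gives a sequence `b` all of whose
finite sums have one colour `z`. A second application of Hindman, colouring by residues modulo
`x = b₀`, yields a finite sum `y = x * t` of the later terms: if `c₀`, `c₁` and `c₀ + c₁` have the
same residue, then `c₁ ≡ 0`. Now `x`, `x * t` and `x * (t + 1) = x + y` are finite sums of `b`, so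
`f x = f x * f t = f x * f (t + 1)`, and `f t = f (t + 1) = 1`.
-/

namespace Hindman

theorem exists_mem_FS_map_eq_zero {M G : Type*} [AddSemigroup M] [AddLeftCancelMonoid G]
    [Finite G] (φ : M →ₙ+ G) (a : Stream' M) : ∃ m ∈ FS a, φ m = 0 := by
  obtain ⟨-, ⟨g, rfl⟩, b, hb⟩ := FS_partition_regular a (Set.range fun g => FS a ∩ φ ⁻¹' {g})
    (Set.finite_range _) fun m hm => ⟨_, ⟨φ m, rfl⟩, hm, rfl⟩
  obtain ⟨-, hb₀⟩ := hb (FS.singleton b 0)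
  obtain ⟨-, hb₀₁⟩ := hb (FS.add_two b 0 1 one_pos)
  obtain ⟨hb₁, -⟩ := hb (FS.singleton b 1)
  refine ⟨b.get 1, hb₁, ?_⟩
  rw [Set.mem_preimage, Set.mem_singleton_iff] at hb₀ hb₀₁
  rwa [map_add, hb₀, add_eq_left] at hb₀₁

theorem exists_mem_FS_dvd (a : Stream' ℕ+) (x : ℕ+) : ∃ y ∈ FS a, x ∣ y := by
  let φ : ℕ+ →ₙ+ ZMod x := ⟨fun n => (n : ℕ), fun m n => by simp⟩
  obtain ⟨y, hy, hφy⟩ := exists_mem_FS_map_eq_zero φ a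
  exact ⟨y, hy, PNat.dvd_iff.mpr ((ZMod.natCast_eq_zero_iff _ _).mp hφy)⟩

end Hindman

/-- Hildebrand's theorem for completely multiplicative functions: if
`f : ℤ₊ → ℂ` is completely multiplicative and takes values in the `k`-th
roots of unity (`k ≥ 1`), then there is `a` with `f a = f (a+1) = 1`. -/
theorem hildebrand_mult (k : ℕ) (hk : 1 ≤ k) (f : ℕ+ → ℂ)
    (hmul : ∀ m n : ℕ+, f (m * n) = f m * f n)
    (hroots : ∀ n : ℕ+, (f n) ^ k = 1) :
    ∃ a : ℕ+, f a = 1 ∧ f (a + 1) = 1 := by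
  have hf_ne_zero (n : ℕ+) : f n ≠ 0 := fun h => by
    simpa [h, zero_pow (by omega : k ≠ 0)] using hroots n
  have hf_range : (Set.range f).Finite :=
    (Polynomial.nthRootsFinset k (1 : ℂ)).finite_toSet.subset (Set.range_subset_iff.mpr fun n => (Polynomial.mem_nthRootsFinset hk 1).mpr (hroots n))
  obtain ⟨-, ⟨z, -, rfl⟩, b, hb⟩ := Hindman.exists_FS_of_finite_cover
    ((fun z => f ⁻¹' {z}) '' Set.range f) (hf_range.image _)
    fun n _ => ⟨_, ⟨f n, ⟨n, rfl⟩, rfl⟩, rfl⟩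
  set x := b.head
  obtain ⟨y, hy, t, rfl⟩ := Hindman.exists_mem_FS_dvd b.tail x
  have hx : f x = z := hb (Hindman.FS.head b)
  have hxt : f (x * t) = z := hb (Hindman.FS.tail b _ hy)
  have hxt₁ : f (x * (t + 1)) = z := by
    rw [mul_add_one, add_comm]; exact hb (Hindman.FS.cons b _ hy)
  refine ⟨t, ?_, ?_⟩
  · rwa [hmul, ← hx, mul_eq_left₀ (hf_ne_zero x)] at hxt
  · rwa [hmul, ← hx, mul_eq_left₀ (hf_ne_zero x)] at hxt₁
end

section
/- Fix k ≥ 1. There exists a constant c(k) such that for every completely multiplicative function f : ℤ₊ → ℂ taking values in the k-th roots of unity, there exists a ≤ c(k) with f(a) = f(a+1) = 1. Moreover, this uniform version follows by a compactness argument from the version without the bound. -/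
/-! The completely multiplicative functions `ℕ+ → ℂ` with values in the finite set of `k`-th
roots of unity form a compact subset of the product space `ℕ+ → ℂ`. On that set the
conditions `f a = 1 ∧ f (a + 1) = 1` are relatively open, and by the non-uniform statement they
cover it; a finite subcover gives the uniform bound. -/

open Set

theorem IsCompact.exists_le_of_subset_iUnion {X ι : Type*} [TopologicalSpace X] [Preorder ι]
    [IsDirectedOrder ι] [Nonempty ι] {K : Set X} (hK : IsCompact K) {U : ι → Set X}
    (hU : ∀ i, IsOpen (U i)) (hKU : K ⊆ ⋃ i, U i) : ∃ c, K ⊆ ⋃ i ≤ c, U i := by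
  obtain ⟨t, ht⟩ := hK.elim_finite_subcover U hU hKU
  obtain ⟨c, hc⟩ := t.exists_le
  refine ⟨c, fun x hx => ?_⟩
  obtain ⟨i, hit, hxi⟩ := mem_iUnion₂.1 (ht hx)
  exact mem_iUnion₂.2 ⟨i, hc i hit, hxi⟩

theorem isCompact_setOf_map_mul_and_mem {M N : Type*} [Mul M] [Mul N] [TopologicalSpace N]
    [ContinuousMul N] [T2Space N] {S : Set N} (hS : IsCompact S) :
    IsCompact {f : M → N | (∀ x y, f (x * y) = f x * f y) ∧ ∀ x, f x ∈ S} := by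
  exact (isCompact_pi_infinite fun _ => hS).inter_left (isClosed_setOfPred_map_mul M N)

theorem finite_setOf_pow_eq {R : Type*} [CommRing R] [IsDomain R] {n : ℕ}
    (hn : 0 < n) (a : R) : {x : R | x ^ n = a}.Finite := by
  rw [← Polynomial.nthRootsFinset_toSet hn]
  exact Finset.finite_toSet _

/-- The uniform version of Hildebrand's theorem follows by compactness from the
non-uniform version: assuming that every completely multiplicative
`f : ℤ₊ → ℂ` with values in the `k`-th roots of unity (`k ≥ 1`) has some `a`
with `f a = f (a+1) = 1`, there is a constant `c = c(k)` such that for every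
such `f` one can find such an `a` with `a ≤ c`. -/
theorem hildebrand_uniform (k : ℕ) (hk : 1 ≤ k)
    (hnonuniform : ∀ f : ℕ+ → ℂ,
      (∀ m n : ℕ+, f (m * n) = f m * f n) →
      (∀ n : ℕ+, (f n) ^ k = 1) →
      ∃ a : ℕ+, f a = 1 ∧ f (a + 1) = 1) :
    ∃ c : ℕ+, ∀ f : ℕ+ → ℂ,
      (∀ m n : ℕ+, f (m * n) = f m * f n) →
      (∀ n : ℕ+, (f n) ^ k = 1) →
      ∃ a : ℕ+, a ≤ c ∧ f a = 1 ∧ f (a + 1) = 1 := by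
  set Z : Set ℂ := {z | z ^ k = 1}
  have hZ : Z.Finite := finite_setOf_pow_eq hk 1
  -- For values in `Z`, `f a = 1` is the open condition `f a ∉ Z \ {1}`.
  set O : Set ℂ := (Z \ {1})ᶜ
  have hO : IsOpen O := (hZ.sdiff (t := {1})).isClosed.isOpen_compl
  set U : ℕ+ → Set (ℕ+ → ℂ) := fun a => (· a) ⁻¹' O ∩ (· (a + 1)) ⁻¹' O
  have hU : ∀ a, IsOpen (U a) := fun a =>
    (hO.preimage (continuous_apply a)).inter (hO.preimage (continuous_apply (a + 1)))
  have hcover : {f : ℕ+ → ℂ | (∀ m n, f (m * n) = f m * f n) ∧ ∀ n, f n ∈ Z} ⊆ ⋃ a, U a := by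
    rintro f ⟨hmul, hpow⟩
    obtain ⟨a, h1, h2⟩ := hnonuniform f hmul hpow
    exact mem_iUnion.2 ⟨a, by simp [U, O, h1, h2]⟩
  obtain ⟨c, hc⟩ :=
    (isCompact_setOf_map_mul_and_mem hZ.isCompact).exists_le_of_subset_iUnion hU hcover
  refine ⟨c, fun f hmul hpow => ?_⟩
  obtain ⟨a, hac, h1, h2⟩ := mem_iUnion₂.1 (hc ⟨hmul, hpow⟩)
  exact ⟨a, hac, by simpa [O, Z, hpow] using h1, by simpa [O, Z, hpow] using h2⟩
end

section
/- Hindman's finite unions theorem: for every finite partition of the collection of finite nonempty subsets of ℤ₊ into classes M₁, …, M_k, there exist finite nonempty sets A₁ ≺ A₂ ≺ … and an index j such that every finite union ⋃_{i∈I} Aᵢ (I finite nonempty) lies in M_j. -/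
/-!
Identify a finite set `S ⊆ ℕ` with the number `∑ e ∈ S, 2 ^ e`; for sets with disjoint supports,
union becomes addition. Hindman's finite sums theorem applied to the induced coloring of the
positive integers gives a sequence all of whose finite sums have the same color. Passing to a
sum subsystem `b` in which `2 ^ b k` divides `b (k + 1)`, the binary digits of `b k` lie below
`b k`, while those of every later term lie at or above it. So the binary supports of the `b k`
form a block sequence, and the union of the supports over `I` is the support of `∑ i ∈ I, b i`,
which is again a finite sum of the original sequence.
-/

open Finset

namespace Hindman

theorem FS_map_subset {M N : Type*} [AddSemigroup M] [AddSemigroup N] (f : M →ₙ+ N)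
    (a : Stream' M) : FS (a.map f) ⊆ f '' FS a := by
  suffices ∀ s, ∀ m ∈ FS s, ∀ a : Stream' M, s = a.map f → m ∈ f '' FS a from
    fun m hm => this _ m hm a rfl
  intro s m hm
  induction hm with
  | head' s =>
    rintro a rfl
    exact ⟨a.head, FS.head a, rfl⟩
  | tail' s m _ ih =>
    rintro a rfl
    obtain ⟨m', hm', rfl⟩ := ih a.tail rfl
    exact ⟨m', FS.tail a m' hm', rfl⟩
  | cons' s m _ ih =>
    rintro a rfl
    obtain ⟨m', hm', rfl⟩ := ih a.tail rfl
    exact ⟨a.head + m', FS.cons a m' hm', map_add f _ _⟩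

theorem exists_FS_subset_fiber {M κ : Type*} [AddSemigroup M] [Nonempty M] [Finite κ]
    (χ : M → κ) : ∃ j, ∃ a : Stream' M, FS a ⊆ χ ⁻¹' {j} := by
  obtain ⟨_, ⟨j, rfl⟩, a, ha⟩ := exists_FS_of_finite_cover (Set.range fun j => χ ⁻¹' {j})
    (Set.finite_range _) fun m _ => Set.mem_sUnion_of_mem (t := χ ⁻¹' {χ m}) rfl ⟨_, rfl⟩
  exact ⟨j, a, ha⟩

theorem exists_FS_subset_fiber_ne_zero {κ : Type*} [Finite κ] (χ : ℕ → κ) :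
    ∃ j, ∃ a : Stream' ℕ, FS a ⊆ {n | n ≠ 0 ∧ χ n = j} := by
  obtain ⟨j, a, ha⟩ := exists_FS_subset_fiber fun n : ℕ+ => χ n
  refine ⟨j, a.map PNat.coeAddHom, (FS_map_subset _ a).trans ?_⟩
  rintro _ ⟨n, hn, rfl⟩
  exact ⟨n.ne_zero, ha hn⟩

theorem FS.exists_dvd (a : Stream' ℕ) (d : ℕ) [NeZero d] : ∃ m ∈ FS a, d ∣ m := by
  set P : ℕ → ℕ := fun r => ∑ i ∈ range r, a.get i
  have of_lt : ∀ r s, r < s → (P r : ZMod d) = P s → ∃ m ∈ FS a, d ∣ m := by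
    intro r s hrs heq
    refine ⟨∑ i ∈ Ico r s, a.get i, FS.finsetSum a _ (nonempty_Ico.mpr hrs), ?_⟩
    have hsplit : (P r : ZMod d) + (∑ i ∈ Ico r s, a.get i : ℕ) = P s := by
      rw [← Nat.cast_add, sum_range_add_sum_Ico _ hrs.le]
    rw [← ZMod.natCast_eq_zero_iff]
    linear_combination hsplit - heq
  obtain ⟨r, s, hne, heq⟩ := Finite.exists_ne_map_eq_of_infinite fun r => (P r : ZMod d)
  rcases hne.lt_or_gt with h | h
  · exact of_lt r s h heq
  · exact of_lt s r h heq.symm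

theorem exists_FS_subset_FS_get_succ_mem {M : Type*} [AddSemigroup M] (a : Stream' M)
    (P : M → Set M) (hP : ∀ m t, (FS t ∩ P m).Nonempty) :
    ∃ b : Stream' M, FS b ⊆ FS a ∧ ∀ k, b.get (k + 1) ∈ P (b.get k) := by
  choose x hxFS hxP using hP
  choose n hn using fun m t => FS.add (hxFS m t)
  -- A state `(t, m)` is the stream still available and the previous term; the next term is taken
  -- from `FS t ∩ P m`, and `t` is then shortened so that its sums can be added to that term.
  let elem : Stream' M × M → M := fun p => x p.2 p.1
  let succ : Stream' M × M → Stream' M × M := fun p => (p.1.drop (n p.2 p.1), elem p)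
  refine ⟨Stream'.corec elem succ (a, a.head), ?_, ?_⟩
  · suffices ∀ s, ∀ m ∈ FS s, ∀ p, s = Stream'.corec elem succ p → m ∈ FS p.1 from
      fun m hm => this _ m hm _ rfl
    intro s m hm
    induction hm with
    | head' s =>
      rintro p rfl
      rw [Stream'.corec_eq, Stream'.head_cons]
      exact hxFS _ _
    | tail' s m _ ih =>
      rintro p rfl
      rw [Stream'.corec_eq, Stream'.tail_cons] at ih
      exact FS_iter_tail_sub_FS _ _ (ih (succ p) rfl)
    | cons' s m _ ih =>
      rintro p rfl
      rw [Stream'.corec_eq, Stream'.tail_cons] at ih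
      rw [Stream'.corec_eq, Stream'.head_cons]
      exact hn _ _ _ (ih (succ p) rfl)
  · suffices ∀ k p, (Stream'.corec elem succ p).get (k + 1) ∈
        P ((Stream'.corec elem succ p).get k) from fun k => this k _
    intro k
    induction k with
    | zero =>
      intro p
      rw [Stream'.corec_eq, Stream'.get_succ, Stream'.tail_cons, Stream'.corec_eq]
      exact hxP _ _
    | succ k ih =>
      intro p
      rw [Stream'.corec_eq, Stream'.get_succ, Stream'.get_succ, Stream'.tail_cons]
      exact ih (succ p)

end Hindman

namespace Nat

theorem lt_of_mem_bitIndices {n e : ℕ} (h : e ∈ n.bitIndices) : e < n :=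
  e.lt_two_pow_self.trans_le (two_pow_le_of_mem_bitIndices h)

theorem le_of_mem_bitIndices_of_two_pow_dvd {n e M : ℕ} (hd : 2 ^ M ∣ n)
    (h : e ∈ n.bitIndices) : M ≤ e := by
  obtain ⟨q, rfl⟩ := hd
  rw [mem_bitIndices, testBit_two_pow_mul] at h
  simp_all

theorem toFinset_bitIndices_nonempty {n : ℕ} (hn : n ≠ 0) : n.bitIndices.toFinset.Nonempty := by
  rw [nonempty_iff_ne_empty]
  intro h
  rw [← sum_toFinset_bitIndices_two_pow n, h, sum_empty] at hn
  exact hn rfl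

theorem toFinset_bitIndices_sum {ι : Type*} [DecidableEq ι] (f : ι → ℕ) {I : Finset ι}
    (h : (I : Set ι).PairwiseDisjoint fun i => (f i).bitIndices.toFinset) :
    (∑ i ∈ I, f i).bitIndices.toFinset = I.biUnion fun i => (f i).bitIndices.toFinset := by
  rw [← toFinset_bitIndices_sum_two_pow (I.biUnion _), sum_biUnion h]
  simp only [sum_toFinset_bitIndices_two_pow]

theorem mem_bitIndices_lt_of_two_pow_dvd_succ {f : ℕ → ℕ} (hf : ∀ k, f k ≠ 0)
    (hdvd : ∀ k, 2 ^ f k ∣ f (k + 1)) ⦃i j : ℕ⦄ (hij : i < j) ⦃e : ℕ⦄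
    (he : e ∈ (f i).bitIndices) ⦃e' : ℕ⦄ (he' : e' ∈ (f j).bitIndices) : e < e' := by
  have hmono : StrictMono f := strictMono_nat_of_lt_succ fun k =>
    (f k).lt_two_pow_self.trans_le (le_of_dvd (pos_of_ne_zero (hf _)) (hdvd k))
  obtain ⟨k, rfl⟩ := Nat.exists_eq_add_of_lt hij
  calc e < f i := lt_of_mem_bitIndices he
    _ ≤ f (i + k) := hmono.monotone (le_add_right i k)
    _ ≤ e' := le_of_mem_bitIndices_of_two_pow_dvd (hdvd _) he'

end Nat

open Hindman

/-- Hindman's finite unions theorem: for every finite coloring (partition into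
`k` classes) of the finite nonempty subsets of `ℕ`, there exist finite nonempty
sets `A 0 ≺ A 1 ≺ …` and a color `j` such that every finite nonempty union
`⋃_{i ∈ I} A i` gets color `j`. -/
theorem hindman_finite_unions (k : ℕ) (c : Finset ℕ → Fin k) :
    ∃ A : ℕ → Finset ℕ, ∃ hne : ∀ i, (A i).Nonempty,
      (∀ i, (A i).max' (hne i) < (A (i + 1)).min' (hne (i + 1))) ∧
      ∃ j : Fin k, ∀ I : Finset ℕ, I.Nonempty → c (I.biUnion A) = j := by
  obtain ⟨j, a, ha⟩ := exists_FS_subset_fiber_ne_zero fun n => c n.bitIndices.toFinset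
  obtain ⟨b, hba, hdvd⟩ :=
    exists_FS_subset_FS_get_succ_mem a (fun m => {n | 2 ^ m ∣ n}) fun m t => FS.exists_dvd t _
  have hb : ∀ m ∈ FS b, m ≠ 0 ∧ c m.bitIndices.toFinset = j := fun m hm => ha (hba hm)
  have hne : ∀ i, b.get i ≠ 0 := fun i => (hb _ (FS.singleton b i)).1
  have hsep := Nat.mem_bitIndices_lt_of_two_pow_dvd_succ hne hdvd
  refine ⟨fun i => (b.get i).bitIndices.toFinset, fun i => Nat.toFinset_bitIndices_nonempty (hne i),
    fun i => ?_, j, fun I hI => ?_⟩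
  · exact hsep i.lt_succ_self (List.mem_toFinset.mp (max'_mem _ _))
      (List.mem_toFinset.mp (min'_mem _ _))
  · rw [← Nat.toFinset_bitIndices_sum]
    · exact (hb _ (FS.finsetSum b I hI)).2
    · intro x _ y _ hxy
      rw [Function.onFun, disjoint_left]
      intro e hx hy
      rw [List.mem_toFinset] at hx hy
      rcases hxy.lt_or_gt with h | h
      · exact lt_irrefl e (hsep h hx hy)
      · exact lt_irrefl e (hsep h hy hx)
end
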